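/- Let H = (V,E) be an n-uniform clique with χ(H) = 3, B = {v ∈ V : deg v > |E|/n²}, and t ∈ {1,…,n}. Then either |E| ≤ t·n^{n-1}, or every edge e ∈ E satisfies |e ∩ B| ≥ t. -/

import Mathlib

/-!
Every edge `f` meets a fixed edge `e`, so an edge through `W` also contains `insert z W` for some
`z ∈ e`. Since `H` is not 2-colourable, colouring `W` against its complement leaves a monochromatic
edge `e`, which must be disjoint from `W` when `#W < n`; iterating gives the Erdős–Lovász bound
`#{f ∈ E | W ⊆ f} ≤ n ^ (n - #W)`, in particular `deg v ≤ n ^ (n - 1)`.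

Now fix an edge `e` with `b` vertices of high degree. Counting the edges through the vertices of `e`,
`|E| ≤ b n^(n-1) + (n - b) |E| / n²`, and this forces `|E| ≤ (b + 1) n^(n-1)`
(for `n = 1`, `b = 0` use `|E| ≤ n · n^(n-1)` instead).
-/

open Finset

section

variable {V : Type*} [DecidableEq V] {n : ℕ} {E : Finset (Finset V)}

def vertexDegree (E : Finset (Finset V)) (v : V) : ℕ := #{f ∈ E | v ∈ f}

theorem exists_edge_subset_or_disjoint
    (hno2 : ¬ ∃ c : V → Fin 2, ∀ e ∈ E, ∃ u ∈ e, ∃ v ∈ e, c u ≠ c v) (W : Finset V) :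
    ∃ e ∈ E, e ⊆ W ∨ Disjoint e W := by
  by_contra! h
  refine hno2 ⟨fun v => if v ∈ W then 0 else 1, fun e he => ?_⟩
  obtain ⟨u, hue, huW⟩ := not_subset.1 (h e he).1
  obtain ⟨v, hve, hvW⟩ := not_disjoint_iff.1 (h e he).2
  exact ⟨u, hue, v, hve, by simp [huW, hvW]⟩

theorem card_filter_superset_le_sum
    (hclique : ∀ e ∈ E, ∀ f ∈ E, (e ∩ f).Nonempty) {e : Finset V} (he : e ∈ E) (W : Finset V) :
    #{f ∈ E | W ⊆ f} ≤ ∑ z ∈ e, #{f ∈ E | insert z W ⊆ f} := by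
  refine (card_le_card fun f hf => ?_).trans card_biUnion_le
  rw [mem_filter] at hf
  obtain ⟨z, hz⟩ := hclique f hf.1 e he
  rw [mem_inter] at hz
  exact mem_biUnion.2 ⟨z, hz.2, mem_filter.2 ⟨hf.1, insert_subset hz.1 hf.2⟩⟩

theorem card_le_sum_vertexDegree
    (hclique : ∀ e ∈ E, ∀ f ∈ E, (e ∩ f).Nonempty) {e : Finset V} (he : e ∈ E) :
    #E ≤ ∑ v ∈ e, vertexDegree E v := by
  simpa [vertexDegree] using card_filter_superset_le_sum hclique he ∅

theorem card_filter_superset_le_pow_of_card_add_eq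
    (huniform : ∀ e ∈ E, e.card = n)
    (hclique : ∀ e ∈ E, ∀ f ∈ E, (e ∩ f).Nonempty)
    (hno2 : ¬ ∃ c : V → Fin 2, ∀ e ∈ E, ∃ u ∈ e, ∃ v ∈ e, c u ≠ c v) {m : ℕ} {W : Finset V}
    (hW : #W + m = n) : #{f ∈ E | W ⊆ f} ≤ n ^ m := by
  induction m generalizing W with
  | zero =>
    rw [pow_zero, card_le_one]
    intro a ha b hb
    rw [mem_filter] at ha hb
    rw [← eq_of_subset_of_card_le ha.2 (by rw [huniform a ha.1]; omega),
      ← eq_of_subset_of_card_le hb.2 (by rw [huniform b hb.1]; omega)]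
  | succ m ih =>
    obtain ⟨e, he, hsub | hdisj⟩ := exists_edge_subset_or_disjoint hno2 W
    · have := huniform e he ▸ card_le_card hsub
      omega
    calc #{f ∈ E | W ⊆ f}
        ≤ ∑ z ∈ e, #{f ∈ E | insert z W ⊆ f} := card_filter_superset_le_sum hclique he W
      _ ≤ ∑ z ∈ e, n ^ m := sum_le_sum fun z hz =>
          ih (by rw [card_insert_of_notMem (disjoint_left.1 hdisj hz)]; omega)
      _ = n ^ (m + 1) := by rw [sum_const, huniform e he, smul_eq_mul, pow_succ']

theorem card_filter_superset_le_pow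
    (huniform : ∀ e ∈ E, e.card = n)
    (hclique : ∀ e ∈ E, ∀ f ∈ E, (e ∩ f).Nonempty)
    (hno2 : ¬ ∃ c : V → Fin 2, ∀ e ∈ E, ∃ u ∈ e, ∃ v ∈ e, c u ≠ c v) (W : Finset V) :
    #{f ∈ E | W ⊆ f} ≤ n ^ (n - #W) := by
  by_cases hW : #W ≤ n
  · exact card_filter_superset_le_pow_of_card_add_eq huniform hclique hno2 (by omega)
  · rw [filter_false_of_mem fun f hf hWf => hW (huniform f hf ▸ card_le_card hWf), card_empty]
    exact Nat.zero_le _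

theorem vertexDegree_le_pow
    (huniform : ∀ e ∈ E, e.card = n)
    (hclique : ∀ e ∈ E, ∀ f ∈ E, (e ∩ f).Nonempty)
    (hno2 : ¬ ∃ c : V → Fin 2, ∀ e ∈ E, ∃ u ∈ e, ∃ v ∈ e, c u ≠ c v) (v : V) :
    vertexDegree E v ≤ n ^ (n - 1) := by
  simpa [vertexDegree] using card_filter_superset_le_pow huniform hclique hno2 {v}

theorem le_succ_mul_of_le_mul_add_mul_div {x D : ℝ} {n b : ℕ} (hn : 1 ≤ n) (hb : b ≤ n)
    (hD : 0 ≤ D) (h_split : x ≤ b * D + (n - b) * (x / n ^ 2)) (h_total : x ≤ n * D) :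
    x ≤ (b + 1) * D := by
  by_cases hc : n = 1 ∧ b = 0
  · obtain ⟨rfl, rfl⟩ := hc
    simpa using h_total
  have hn' : (1 : ℝ) ≤ n := by exact_mod_cast hn
  have hc_pos : (0 : ℝ) < n ^ 2 - n + b := by
    rcases Nat.eq_zero_or_pos b with rfl | hb0
    · have : (2 : ℝ) ≤ n := by exact_mod_cast (show 2 ≤ n by omega)
      nlinarith
    · have : (1 : ℝ) ≤ b := by exact_mod_cast hb0
      nlinarith
  have h_cleared : (n ^ 2 - n + b) * x ≤ b * n ^ 2 * D := by
    have hn2 : (0 : ℝ) < n ^ 2 := by positivity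
    have : x * n ^ 2 ≤ b * D * n ^ 2 + (n - b) * x :=
      calc x * n ^ 2 ≤ (b * D + (n - b) * (x / n ^ 2)) * n ^ 2 := by gcongr
        _ = b * D * n ^ 2 + (n - b) * x := by field_simp
    linarith
  -- `4 ((n² - n + b)(b + 1) - b n²) = (2b - n + 1)² + (n - 1)(3n + 1)`
  have h_coeff : (b : ℝ) * n ^ 2 ≤ (n ^ 2 - n + b) * (b + 1) := by
    nlinarith [sq_nonneg (2 * (b : ℝ) - n + 1)]
  refine le_of_mul_le_mul_left ?_ hc_pos
  nlinarith [mul_le_mul_of_nonneg_right h_coeff hD]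

theorem card_le_succ_card_high_degree_mul_pow
    (huniform : ∀ e ∈ E, e.card = n)
    (hclique : ∀ e ∈ E, ∀ f ∈ E, (e ∩ f).Nonempty)
    (hno2 : ¬ ∃ c : V → Fin 2, ∀ e ∈ E, ∃ u ∈ e, ∃ v ∈ e, c u ≠ c v) {e : Finset V} (he : e ∈ E) :
    #E ≤ (#{v ∈ e | (vertexDegree E v : ℝ) > (#E : ℝ) / (n : ℝ) ^ 2} + 1) * n ^ (n - 1) := by
  set P : V → Prop := fun v => (vertexDegree E v : ℝ) > (#E : ℝ) / (n : ℝ) ^ 2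
  set D := n ^ (n - 1)
  have hn : 1 ≤ n := huniform e he ▸ card_pos.2 (by simpa using hclique e he e he)
  have hb : #{v ∈ e | P v} ≤ n := huniform e he ▸ card_filter_le e P
  have hdeg (v : V) : (vertexDegree E v : ℝ) ≤ D := by
    exact_mod_cast vertexDegree_le_pow huniform hclique hno2 v
  have h_cover : (#E : ℝ) ≤ ∑ v ∈ e, (vertexDegree E v : ℝ) := by
    exact_mod_cast card_le_sum_vertexDegree hclique he
  have h_split : ∑ v ∈ e, (vertexDegree E v : ℝ) ≤
      #{v ∈ e | P v} * D + (n - #{v ∈ e | P v}) * ((#E : ℝ) / n ^ 2) := by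
    rw [← sum_filter_add_sum_filter_not e P]
    have h_low : #{v ∈ e | ¬ P v} = (n : ℝ) - #{v ∈ e | P v} := by
      have h_card := card_filter_add_card_filter_not (s := e) P
      rw [huniform e he] at h_card
      rw [eq_sub_iff_add_eq, add_comm]
      exact_mod_cast h_card
    rw [← h_low]
    gcongr
    · exact (sum_le_card_nsmul _ _ _ fun v _ => hdeg v).trans_eq (nsmul_eq_mul _ _)
    · exact (sum_le_card_nsmul _ _ _ fun v hv => not_lt.1 (mem_filter.1 hv).2).trans_eq
        (nsmul_eq_mul _ _)
  have h_total : ∑ v ∈ e, (vertexDegree E v : ℝ) ≤ n * D :=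
    (sum_le_card_nsmul _ _ _ fun v _ => hdeg v).trans_eq (by rw [huniform e he, nsmul_eq_mul])
  rw [← Nat.cast_le (α := ℝ)]
  push_cast
  exact le_succ_mul_of_le_mul_add_mul_div hn hb (by positivity)
    (h_cover.trans h_split) (h_cover.trans h_total)

end

theorem few_edges_or_big_intersection_general {V : Type*} [DecidableEq V] (n t : ℕ)
    (E : Finset (Finset V))
    (huniform : ∀ e ∈ E, e.card = n)
    (hclique : ∀ e ∈ E, ∀ f ∈ E, (e ∩ f).Nonempty)
    (hno2 : ¬ ∃ c : V → Fin 2, ∀ e ∈ E, ∃ u ∈ e, ∃ v ∈ e, c u ≠ c v) :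
    E.card ≤ t * n ^ (n - 1) ∨
      ∀ e ∈ E, t ≤ (e.filter
        (fun v => ((E.filter (fun f => v ∈ f)).card : ℝ) > (E.card : ℝ) / (n : ℝ) ^ 2)).card := by
  refine or_iff_not_imp_right.2 fun h => ?_
  push Not at h
  obtain ⟨e, he, hlt⟩ := h
  exact (card_le_succ_card_high_degree_mul_pow huniform hclique hno2 he).trans
    (Nat.mul_le_mul_right _ hlt)

theorem few_edges_or_big_intersection {V : Type*} [DecidableEq V] (n t : ℕ)
    (E : Finset (Finset V))
    (huniform : ∀ e ∈ E, e.card = n)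
    (hclique : ∀ e ∈ E, ∀ f ∈ E, (e ∩ f).Nonempty)
    (hno2 : ¬ ∃ c : V → Fin 2, ∀ e ∈ E, ∃ u ∈ e, ∃ v ∈ e, c u ≠ c v)
    (hyes3 : ∃ c : V → Fin 3, ∀ e ∈ E, ∃ u ∈ e, ∃ v ∈ e, c u ≠ c v)
    (ht1 : 1 ≤ t) (htn : t ≤ n) :
    E.card ≤ t * n ^ (n - 1) ∨
      ∀ e ∈ E, t ≤ (e.filter
        (fun v => ((E.filter (fun f => v ∈ f)).card : ℝ) > (E.card : ℝ) / (n : ℝ) ^ 2)).card :=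
  few_edges_or_big_intersection_general n t E huniform hclique hno2
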